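/- arXiv:2205.04194 — 2 statements merged into one kernel-verified Lean document; each statement's English description precedes it below -/
import Mathlib

section
/- For all x, t ∈ ℝ with |x| ≤ 1 and |t| < 1, the generating function identity ∑_{n=0}^∞ P_n(x) t^n = 1/√(1 − 2xt + t²) holds. -/
/-- The Legendre polynomials, via the three-term recurrence. -/
noncomputable def legendre : ℕ → ℝ → ℝ
  | 0 => fun _ => 1
  | 1 => fun x => x
  | n + 2 => fun x =>
      ((2 * (n : ℝ) + 3) * x * legendre (n + 1) x - ((n : ℝ) + 1) * legendre n x) / ((n : ℝ) + 2)

/-!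
The function `w(z)^(-1/2)`, `w(z) = 1 - 2xz + z²`, is holomorphic on the unit disc: for `|x| ≤ 1`
and `|z| < 1`, `w(z)` never lies on the closed negative real axis. It solves
`w f' = (x - z) f`, and differentiating this equation `n` times and evaluating at `0` shows that
`f⁽ⁿ⁾(0) / n!` satisfies Bonnet's recurrence, the defining recurrence of `P_n(x)`. The Taylor
series of `f` at `0` converges on the whole disc, so it is `∑ P_n(x) zⁿ` there.
-/

open Complex Metric Nat

lemma legendre_add_two (n : ℕ) (x : ℝ) :
    (n + 2) * legendre (n + 2) x = (2 * n + 3) * x * legendre (n + 1) x - (n + 1) * legendre n x := by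
  rw [legendre]
  field_simp

section LegendreODE

variable {𝕜 : Type*} [NontriviallyNormedField 𝕜]

lemma hasDerivAt_one_sub_two_mul_add_sq (c z : 𝕜) :
    HasDerivAt (fun z => 1 - 2 * c * z + z ^ 2) (2 * z - 2 * c) z :=
  ((((hasDerivAt_id' z).const_mul (2 * c)).const_sub 1).fun_add
    (hasDerivAt_pow 2 z)).congr_deriv (by ring)

variable [CompleteSpace 𝕜] {f : 𝕜 → 𝕜} {U : Set 𝕜} {c : 𝕜}

/-- At `n = 0` the truncated index `n - 1` is harmless: its coefficient `n²` vanishes. -/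
theorem iteratedDeriv_legendre_ode (hU : IsOpen U) (hf : AnalyticOnNhd 𝕜 f U)
    (hode : ∀ z ∈ U, (1 - 2 * c * z + z ^ 2) * deriv f z = (c - z) * f z) (n : ℕ) :
    ∀ z ∈ U, (1 - 2 * c * z + z ^ 2) * iteratedDeriv (n + 1) f z
      + (2 * n + 1) * (z - c) * iteratedDeriv n f z + n ^ 2 * iteratedDeriv (n - 1) f z = 0 := by
  have hD : ∀ k, ∀ z ∈ U, HasDerivAt (iteratedDeriv k f) (iteratedDeriv (k + 1) f z) z := by
    intro k z hz
    rw [iteratedDeriv_succ, iteratedDeriv_eq_iterate]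
    exact (hf.iterated_deriv k z hz).differentiableAt.hasDerivAt
  induction n with
  | zero =>
    intro z hz
    simp only [zero_add, iteratedDeriv_one, iteratedDeriv_zero]
    linear_combination hode z hz
  | succ n ih =>
    intro z hz
    have hE := (((hasDerivAt_one_sub_two_mul_add_sq c z).fun_mul (hD (n + 1) z hz)).fun_add
      ((((hasDerivAt_id' z).sub_const c).const_mul (2 * n + 1 : 𝕜)).fun_mul (hD n z hz))).fun_add
      ((hD (n - 1) z hz).const_mul ((n : 𝕜) ^ 2))
    have hzero := hE.deriv
    rw [Filter.EventuallyEq.deriv_eq (f := fun _ => (0 : 𝕜)) ?_, deriv_const] at hzero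
    swap
    · filter_upwards [hU.mem_nhds hz] with w hw using ih w hw
    have hshift : (n : 𝕜) ^ 2 * iteratedDeriv (n - 1 + 1) f z = n ^ 2 * iteratedDeriv n f z := by
      cases n <;> simp
    push_cast [Nat.add_sub_cancel]
    linear_combination -hzero - hshift

theorem iteratedDeriv_succ_zero_of_legendre_ode (hU : IsOpen U) (h0 : 0 ∈ U)
    (hf : AnalyticOnNhd 𝕜 f U)
    (hode : ∀ z ∈ U, (1 - 2 * c * z + z ^ 2) * deriv f z = (c - z) * f z) (n : ℕ) :
    iteratedDeriv (n + 1) f 0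
      = (2 * n + 1) * c * iteratedDeriv n f 0 - n ^ 2 * iteratedDeriv (n - 1) f 0 := by
  linear_combination iteratedDeriv_legendre_ode hU hf hode n 0 h0

end LegendreODE

/-- If `w = 1 - 2xz + z²` is real then `Im w = 2 Im z (Re z - x) = 0`; in both cases
`Re w > 0` follows from `x² ≤ 1` and `|z|² < 1`. -/
lemma one_sub_two_mul_add_sq_mem_slitPlane {x : ℝ} (hx : |x| ≤ 1) {z : ℂ} (hz : ‖z‖ < 1) :
    1 - 2 * x * z + z ^ 2 ∈ slitPlane := by
  have hz2 : z.re ^ 2 + z.im ^ 2 < 1 := by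
    rw [← sq_lt_one_iff₀ (norm_nonneg z), ← normSq_eq_norm_sq, normSq_apply] at hz
    nlinarith
  have hx2 : x ^ 2 ≤ 1 := by nlinarith [sq_abs x, abs_nonneg x]
  rw [mem_slitPlane_iff]
  by_contra! h
  obtain ⟨hre, him⟩ := h
  simp only [sub_re, add_re, one_re, mul_re, sq, re_ofNat, im_ofNat, ofReal_re, ofReal_im,
    sub_im, add_im, one_im, mul_im] at hre him
  rcases mul_eq_zero.mp (show z.im * (z.re - x) = 0 by linarith) with him0 | hrex
  · rw [him0] at hre
    nlinarith [sq_nonneg (z.re - x)]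
  · rw [sub_eq_zero.mp hrex] at hre hz2
    nlinarith

noncomputable def legendreGen (x : ℝ) (z : ℂ) : ℂ := (1 - 2 * x * z + z ^ 2) ^ (-(1 / 2) : ℂ)

section LegendreGen

variable {x : ℝ}

lemma hasDerivAt_legendreGen (hx : |x| ≤ 1) {z : ℂ} (hz : ‖z‖ < 1) :
    HasDerivAt (legendreGen x)
      (-(1 / 2) * (1 - 2 * x * z + z ^ 2) ^ (-(1 / 2) - 1 : ℂ) * (2 * z - 2 * x)) z :=
  (hasDerivAt_one_sub_two_mul_add_sq (x : ℂ) z).cpow_const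
    (one_sub_two_mul_add_sq_mem_slitPlane hx hz)

lemma analyticOnNhd_legendreGen (hx : |x| ≤ 1) : AnalyticOnNhd ℂ (legendreGen x) (ball 0 1) :=
  DifferentiableOn.analyticOnNhd (fun _ hz =>
    (hasDerivAt_legendreGen hx (mem_ball_zero_iff.mp hz)).differentiableAt.differentiableWithinAt)
    isOpen_ball

lemma legendreGen_ode (hx : |x| ≤ 1) : ∀ z ∈ ball (0 : ℂ) 1,
    (1 - 2 * x * z + z ^ 2) * deriv (legendreGen x) z = (x - z) * legendreGen x z := by
  intro z hz
  have hz' := mem_ball_zero_iff.mp hz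
  have hw := slitPlane_ne_zero (one_sub_two_mul_add_sq_mem_slitPlane hx hz')
  rw [(hasDerivAt_legendreGen hx hz').deriv, legendreGen, cpow_sub _ _ hw, cpow_one]
  field_simp
  ring

lemma iteratedDeriv_legendreGen_zero (hx : |x| ≤ 1) (n : ℕ) :
    iteratedDeriv n (legendreGen x) 0 = n ! * legendre n x := by
  have hrec := iteratedDeriv_succ_zero_of_legendre_ode isOpen_ball (mem_ball_self one_pos)
    (analyticOnNhd_legendreGen hx) (legendreGen_ode hx)
  induction n using Nat.twoStepInduction with
  | zero => simp [legendreGen, legendre]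
  | one => simp [hrec 0, legendreGen, legendre]
  | more n ih₁ ih₂ =>
    rw [hrec, Nat.add_sub_cancel, ih₂, ih₁, Nat.factorial_succ (n + 1), Nat.factorial_succ n]
    have h := congrArg ((↑) : ℝ → ℂ) (legendre_add_two n x)
    push_cast at h ⊢
    linear_combination (-((n : ℂ) + 1) * n !) * h

lemma legendreGen_ofReal (hx : |x| ≤ 1) (t : ℝ) :
    legendreGen x t = ((1 / Real.sqrt (1 - 2 * x * t + t ^ 2) : ℝ) : ℂ) := by
  have hw : 0 ≤ 1 - 2 * x * t + t ^ 2 := by nlinarith [sq_nonneg (t - x), sq_abs x, abs_nonneg x]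
  rw [legendreGen, one_div (Real.sqrt _), Real.sqrt_eq_rpow, ← Real.rpow_neg hw, ofReal_cpow hw]
  push_cast
  ring_nf

end LegendreGen

theorem legendre_generating_function (x t : ℝ) (hx : |x| ≤ 1) (ht : |t| < 1) :
    ∑' n : ℕ, legendre n x * t ^ n = 1 / Real.sqrt (1 - 2 * x * t + t ^ 2) := by
  have hsum := hasSum_taylorSeries_on_ball (analyticOnNhd_legendreGen hx).differentiableOn
    (z := t) (by simpa using ht)
  simp only [iteratedDeriv_legendreGen_zero hx, sub_zero, smul_eq_mul, legendreGen_ofReal hx]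
    at hsum
  refine (hasSum_ofReal.mp (hsum.congr_fun fun n => ?_)).tsum_eq
  have : (n ! : ℂ) ≠ 0 := Nat.cast_ne_zero.mpr n.factorial_ne_zero
  push_cast
  field_simp
end

section
/- Let X, Y ∈ ℝ³ with 0 < ‖Y‖ < ‖X‖, let cos α = ⟨X,Y⟩/(‖X‖‖Y‖), and r = ‖Y‖/‖X‖. Then 1/‖X − Y‖ = (1/‖X‖) ∑_{n=0}^∞ P_n(cos α) r^n, and the series converges absolutely. -/
/-!
Write `x = (z + z̄) / 2` with `‖z‖ = 1`, so that `1 - 2 x t + t² = (1 - z t)(1 - z̄ t)`. Expanding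
each factor of `(1 - z t) ^ (-1/2) (1 - z̄ t) ^ (-1/2)` with the coefficients `aₖ = C(2k, k) / 4ᵏ`
of `(1 - u) ^ (-1/2)` gives a series whose coefficients obey the Legendre three-term recurrence,
because `G = ∑ aₖ uᵏ` solves `2 (1 - u) G' = G`. Hence `Pₙ(x) = ∑_{i+j=n} aᵢ aⱼ zⁱ z̄ʲ`; as the
`aₖ` are nonnegative with `∑_{i+j=n} aᵢ aⱼ = 1`, this gives `|Pₙ(x)| ≤ 1` and absolute
convergence for `r < 1`. The sum is `|G(r z)|² ≥ 0` and its square is `1 / (1 - 2 x r + r²)`,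
while the law of cosines gives `‖X - Y‖ = ‖X‖ √(1 - 2 r cos α + r²)`.
-/

open Finset PowerSeries ComplexConjugate

/-- The coefficients of `(1 - u) ^ (-1 / 2)`. -/
noncomputable def invSqrtCoeff (k : ℕ) : ℝ := k.centralBinom / 4 ^ k

theorem invSqrtCoeff_nonneg (k : ℕ) : 0 ≤ invSqrtCoeff k := by
  unfold invSqrtCoeff; positivity

theorem invSqrtCoeff_le_one (k : ℕ) : invSqrtCoeff k ≤ 1 := by
  rw [invSqrtCoeff, div_le_one (by positivity)]
  exact_mod_cast Nat.centralBinom_le_four_pow k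

theorem two_mul_succ_mul_invSqrtCoeff_succ (k : ℕ) :
    2 * (k + 1) * invSqrtCoeff (k + 1) = (2 * k + 1) * invSqrtCoeff k := by
  have h : ((k + 1 : ℕ) : ℝ) * (k + 1).centralBinom = 2 * (2 * k + 1) * k.centralBinom := by
    exact_mod_cast Nat.succ_mul_centralBinom_succ k
  simp only [invSqrtCoeff, pow_succ]
  push_cast at h
  field_simp
  linear_combination 2 * h

theorem coeff_X_mul_derivative {R : Type*} [CommSemiring R] (f : R⟦X⟧) (n : ℕ) :
    coeff n (X * d⁄dX R f) = n * coeff n f := by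
  rcases n with _ | n
  · simp
  · rw [coeff_succ_X_mul, coeff_derivative, mul_comm]; push_cast; rfl

noncomputable def invSqrtSeries : ℂ⟦X⟧ := mk fun k => (invSqrtCoeff k : ℂ)

theorem invSqrtSeries_ode : 2 * (1 - X) * d⁄dX ℂ invSqrtSeries = invSqrtSeries := by
  ext n
  have h : (2 * (n + 1) * invSqrtCoeff (n + 1) : ℂ) = (2 * n + 1) * invSqrtCoeff n := by
    exact_mod_cast two_mul_succ_mul_invSqrtCoeff_succ n
  have hC : (2 : ℂ⟦X⟧) * (1 - X) * d⁄dX ℂ invSqrtSeries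
      = C 2 * d⁄dX ℂ invSqrtSeries - C 2 * (X * d⁄dX ℂ invSqrtSeries) := by
    rw [map_ofNat]; ring
  rw [hC, map_sub, coeff_C_mul, coeff_C_mul, coeff_X_mul_derivative, coeff_derivative]
  simp only [invSqrtSeries, coeff_mk]
  linear_combination h

theorem derivative_rescale {R : Type*} [CommSemiring R] (a : R) (f : R⟦X⟧) :
    d⁄dX R (rescale a f) = C a * rescale a (d⁄dX R f) := by
  ext n
  simp [coeff_derivative, pow_succ]
  ring

theorem rescale_invSqrtSeries_ode (a : ℂ) :
    2 * (1 - C a * X) * d⁄dX ℂ (rescale a invSqrtSeries) = C a * rescale a invSqrtSeries := by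
  have h := congrArg (rescale a) invSqrtSeries_ode
  rw [map_mul, map_mul, map_sub, map_one, map_ofNat, rescale_X] at h
  rw [derivative_rescale, ← h]
  ring

/-- `(1 - z t) ^ (-1 / 2) * (1 - w t) ^ (-1 / 2)`; when `z * w = 1` and `z + w = 2 * x` this is
the generating function `∑ Pₙ(x) tⁿ` of the Legendre polynomials. -/
noncomputable def legendreGenSeries (z w : ℂ) : ℂ⟦X⟧ :=
  rescale z invSqrtSeries * rescale w invSqrtSeries

theorem legendreGenSeries_ode (z w : ℂ) :
    2 * (1 - C z * X) * (1 - C w * X) * d⁄dX ℂ (legendreGenSeries z w)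
      = (C z * (1 - C w * X) + C w * (1 - C z * X)) * legendreGenSeries z w := by
  have hz := rescale_invSqrtSeries_ode z
  have hw := rescale_invSqrtSeries_ode w
  rw [legendreGenSeries, Derivation.leibniz, smul_eq_mul, smul_eq_mul]
  linear_combination (1 - C w * X) * rescale w invSqrtSeries * hz
    + (1 - C z * X) * rescale z invSqrtSeries * hw

theorem coeff_legendreGenSeries_rec (z w : ℂ) (n : ℕ) :
    (n + 2) * coeff (n + 2) (legendreGenSeries z w)
      = (2 * n + 3) * ((z + w) / 2) * coeff (n + 1) (legendreGenSeries z w)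
        - (n + 1) * (z * w) * coeff n (legendreGenSeries z w) := by
  set F := legendreGenSeries z w
  have h : C 2 * (X * d⁄dX ℂ F) - C (2 * (z + w)) * (X * (X * d⁄dX ℂ F))
        + C (2 * (z * w)) * (X ^ 2 * (X * d⁄dX ℂ F))
      = C (z + w) * (X * F) - C (2 * (z * w)) * (X ^ 2 * F) := by
    simp only [map_mul, map_add, map_ofNat]
    linear_combination X * legendreGenSeries_ode z w
  have hc := congrArg (coeff (n + 2)) h
  simp only [LinearMap.map_add, LinearMap.map_sub, coeff_C_mul, coeff_X_pow_mul, coeff_succ_X_mul,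
    coeff_X_mul_derivative, coeff_derivative] at hc
  push_cast at hc
  linear_combination hc / 2

theorem coeff_legendreGenSeries (z w : ℂ) (n : ℕ) :
    coeff n (legendreGenSeries z w)
      = ∑ p ∈ antidiagonal n,
          ((invSqrtCoeff p.1 * invSqrtCoeff p.2 : ℝ) : ℂ) * (z ^ p.1 * w ^ p.2) := by
  rw [legendreGenSeries, coeff_mul]
  refine sum_congr rfl fun p _ => ?_
  simp only [coeff_rescale, invSqrtSeries, coeff_mk]
  push_cast
  ring

theorem coeff_zero_legendreGenSeries (z w : ℂ) : coeff 0 (legendreGenSeries z w) = 1 := by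
  simp [coeff_legendreGenSeries, invSqrtCoeff]

theorem coeff_one_legendreGenSeries (z w : ℂ) :
    coeff 1 (legendreGenSeries z w) = (z + w) / 2 := by
  simp [coeff_legendreGenSeries, Finset.Nat.sum_antidiagonal_succ, invSqrtCoeff,
    Nat.centralBinom, Nat.choose]
  ring

theorem legendre_succ_succ (n : ℕ) (x : ℝ) :
    legendre (n + 2) x
      = ((2 * n + 3) * x * legendre (n + 1) x - (n + 1) * legendre n x) / (n + 2) := rfl

theorem legendre_one (n : ℕ) : legendre n 1 = 1 := by
  induction n using Nat.twoStepInduction with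
  | zero => rfl
  | one => rfl
  | more n ih₁ ih₂ =>
    rw [legendre_succ_succ, ih₁, ih₂]
    field_simp
    ring

theorem coeff_legendreGenSeries_eq_legendre {z w : ℂ} {x : ℝ} (hzw : z * w = 1)
    (hx : z + w = 2 * x) (n : ℕ) : coeff n (legendreGenSeries z w) = legendre n x := by
  induction n using Nat.twoStepInduction with
  | zero => simp [coeff_zero_legendreGenSeries, legendre]
  | one => simp [coeff_one_legendreGenSeries, hx, legendre]
  | more n ih₁ ih₂ =>
    have hn : (n + 2 : ℂ) ≠ 0 := by exact_mod_cast (n + 1).succ_ne_zero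
    have h := coeff_legendreGenSeries_rec z w n
    rw [ih₁, ih₂, hzw, hx] at h
    apply mul_left_cancel₀ hn
    rw [h, legendre_succ_succ]
    push_cast
    field_simp

theorem coeff_legendreGenSeries_one_one (n : ℕ) : coeff n (legendreGenSeries 1 1) = 1 := by
  rw [coeff_legendreGenSeries_eq_legendre (x := 1) (mul_one 1) (by norm_num), legendre_one,
    Complex.ofReal_one]

theorem sum_antidiagonal_invSqrtCoeff_mul (n : ℕ) :
    ∑ p ∈ antidiagonal n, invSqrtCoeff p.1 * invSqrtCoeff p.2 = 1 := by
  have h := coeff_legendreGenSeries_one_one n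
  simp only [coeff_legendreGenSeries, one_pow, mul_one] at h
  exact_mod_cast h

theorem norm_coeff_legendreGenSeries_le_one {z w : ℂ} (hz : ‖z‖ ≤ 1) (hw : ‖w‖ ≤ 1) (n : ℕ) :
    ‖coeff n (legendreGenSeries z w)‖ ≤ 1 := by
  rw [coeff_legendreGenSeries, ← sum_antidiagonal_invSqrtCoeff_mul n]
  refine (norm_sum_le _ _).trans (sum_le_sum fun p _ => ?_)
  have ha : 0 ≤ invSqrtCoeff p.1 * invSqrtCoeff p.2 :=
    mul_nonneg (invSqrtCoeff_nonneg _) (invSqrtCoeff_nonneg _)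
  rw [norm_mul, Complex.norm_real, Real.norm_of_nonneg ha, norm_mul, norm_pow, norm_pow]
  exact mul_le_of_le_one_right ha (mul_le_one₀ (pow_le_one₀ (norm_nonneg _) hz)
    (pow_nonneg (norm_nonneg _) _) (pow_le_one₀ (norm_nonneg _) hw))

theorem tsum_coeff_mul_pow_mul_tsum {R : Type*} [NormedCommRing R] [CompleteSpace R]
    {f g : R⟦X⟧} {u : R} (hf : Summable fun k => ‖coeff k f * u ^ k‖)
    (hg : Summable fun k => ‖coeff k g * u ^ k‖) :
    (∑' k, coeff k f * u ^ k) * (∑' k, coeff k g * u ^ k) = ∑' n, coeff n (f * g) * u ^ n := by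
  rw [tsum_mul_tsum_eq_tsum_sum_antidiagonal_of_summable_norm hf hg]
  refine tsum_congr fun n => ?_
  rw [coeff_mul, sum_mul]
  refine sum_congr rfl fun p hp => ?_
  rw [← mem_antidiagonal.1 hp, pow_add]
  ring

theorem coeff_rescale_mul_pow {R : Type*} [CommSemiring R] (f : R⟦X⟧) (a u : R) (k : ℕ) :
    coeff k (rescale a f) * u ^ k = coeff k f * (a * u) ^ k := by
  rw [coeff_rescale, mul_pow]; ring

theorem summable_norm_coeff_invSqrtSeries_mul_pow {v : ℂ} (hv : ‖v‖ < 1) :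
    Summable fun k => ‖coeff k invSqrtSeries * v ^ k‖ := by
  refine Summable.of_nonneg_of_le (fun _ => norm_nonneg _) (fun k => ?_)
    (summable_geometric_of_lt_one (norm_nonneg v) hv)
  rw [invSqrtSeries, coeff_mk, norm_mul, norm_pow, Complex.norm_real,
    Real.norm_of_nonneg (invSqrtCoeff_nonneg k)]
  exact mul_le_of_le_one_left (pow_nonneg (norm_nonneg v) k) (invSqrtCoeff_le_one k)

theorem tsum_invSqrtSeries_sq_mul {v : ℂ} (hv : ‖v‖ < 1) :
    (∑' k, coeff k invSqrtSeries * v ^ k) ^ 2 * (1 - v) = 1 := by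
  have hs := summable_norm_coeff_invSqrtSeries_mul_pow hv
  have hv1 : 1 - v ≠ 0 := sub_ne_zero.2 fun h => by simp [← h] at hv
  have hG : invSqrtSeries * invSqrtSeries = legendreGenSeries 1 1 := by
    simp [legendreGenSeries]
  rw [sq, tsum_coeff_mul_pow_mul_tsum hs hs, hG]
  simp only [coeff_legendreGenSeries_one_one, one_mul, tsum_geometric_of_norm_lt_one hv]
  exact inv_mul_cancel₀ hv1

theorem tsum_coeff_legendreGenSeries_mul_pow {z w u : ℂ} (hz : ‖z * u‖ < 1) (hw : ‖w * u‖ < 1) :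
    ∑' n, coeff n (legendreGenSeries z w) * u ^ n
      = (∑' k, coeff k invSqrtSeries * (z * u) ^ k)
        * (∑' k, coeff k invSqrtSeries * (w * u) ^ k) := by
  simp_rw [← coeff_rescale_mul_pow]
  rw [legendreGenSeries, tsum_coeff_mul_pow_mul_tsum] <;> simp_rw [coeff_rescale_mul_pow]
  · exact summable_norm_coeff_invSqrtSeries_mul_pow hz
  · exact summable_norm_coeff_invSqrtSeries_mul_pow hw

theorem exists_norm_eq_one_add_conj_eq {x : ℝ} (hx : |x| ≤ 1) :
    ∃ z : ℂ, ‖z‖ = 1 ∧ z + conj z = 2 * x := by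
  obtain ⟨hx₁, hx₂⟩ := abs_le.1 hx
  refine ⟨Complex.exp (Real.arccos x * Complex.I), Complex.norm_exp_ofReal_mul_I _, ?_⟩
  rw [Complex.add_conj, Complex.exp_ofReal_mul_I_re, Real.cos_arccos hx₁ hx₂]
  push_cast
  ring

theorem legendre_eq_coeff_legendreGenSeries {z : ℂ} {x : ℝ} (hz : ‖z‖ = 1)
    (hx : z + conj z = 2 * x) (n : ℕ) :
    (legendre n x : ℂ) = coeff n (legendreGenSeries z (conj z)) :=
  (coeff_legendreGenSeries_eq_legendre (by rw [Complex.mul_conj', hz]; norm_num) hx n).symm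

theorem abs_legendre_le_one {x : ℝ} (hx : |x| ≤ 1) (n : ℕ) : |legendre n x| ≤ 1 := by
  obtain ⟨z, hz, hzx⟩ := exists_norm_eq_one_add_conj_eq hx
  have h := norm_coeff_legendreGenSeries_le_one hz.le ((Complex.norm_conj z).trans hz).le n
  rwa [← legendre_eq_coeff_legendreGenSeries hz hzx, Complex.norm_real, Real.norm_eq_abs] at h

theorem summable_abs_legendre_mul_pow {x r : ℝ} (hx : |x| ≤ 1) (hr₀ : 0 ≤ r) (hr₁ : r < 1) :
    Summable fun n => |legendre n x * r ^ n| := by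
  refine Summable.of_nonneg_of_le (fun _ => abs_nonneg _) (fun n => ?_)
    (summable_geometric_of_lt_one hr₀ hr₁)
  rw [abs_mul, abs_pow, abs_of_nonneg hr₀]
  exact mul_le_of_le_one_left (pow_nonneg hr₀ n) (abs_legendre_le_one hx n)

theorem tsum_legendre_mul_pow {x r : ℝ} (hx : |x| ≤ 1) (hr₀ : 0 ≤ r) (hr₁ : r < 1) :
    ∑' n, legendre n x * r ^ n = 1 / √(1 - 2 * x * r + r ^ 2) := by
  obtain ⟨z, hz, hzx⟩ := exists_norm_eq_one_add_conj_eq hx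
  set S := ∑' n, legendre n x * r ^ n
  set A := ∑' k, coeff k invSqrtSeries * (z * r) ^ k
  have hzr : ‖z * r‖ < 1 := by simpa [hz, abs_of_nonneg hr₀] using hr₁
  have hzr' : ‖conj z * r‖ < 1 := by simpa [hz, abs_of_nonneg hr₀] using hr₁
  have hconj : ∑' k, coeff k invSqrtSeries * (conj z * r) ^ k = conj A := by
    simp [A, Complex.conj_tsum, invSqrtSeries]
  have hS : (S : ℂ) = A * conj A := by
    rw [Complex.ofReal_tsum, ← hconj, ← tsum_coeff_legendreGenSeries_mul_pow hzr hzr']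
    simp_rw [Complex.ofReal_mul, legendre_eq_coeff_legendreGenSeries hz hzx, Complex.ofReal_pow]
  have hS₀ : 0 ≤ S := by
    rw [Complex.mul_conj, Complex.ofReal_inj] at hS
    exact hS ▸ Complex.normSq_nonneg A
  have hD : ((1 - 2 * x * r + r ^ 2 : ℝ) : ℂ) = (1 - z * r) * (1 - conj z * r) := by
    push_cast
    have hzz : z * conj z = 1 := by rw [Complex.mul_conj', hz]; norm_num
    linear_combination (r : ℂ) * hzx - (r : ℂ) ^ 2 * hzz
  have hSq : S ^ 2 * (1 - 2 * x * r + r ^ 2) = 1 := by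
    have h₁ := tsum_invSqrtSeries_sq_mul hzr
    have h₂ := tsum_invSqrtSeries_sq_mul hzr'
    rw [hconj] at h₂
    apply Complex.ofReal_injective
    rw [Complex.ofReal_mul, hD, Complex.ofReal_pow, hS, Complex.ofReal_one]
    linear_combination (conj A ^ 2 * (1 - conj z * r)) * h₁ + h₂
  have hD₀ : 0 < √(1 - 2 * x * r + r ^ 2) :=
    Real.sqrt_pos.2 (pos_of_mul_pos_right (by rw [hSq]; exact one_pos) (sq_nonneg S))
  rw [eq_div_iff hD₀.ne', ← Real.sqrt_sq hS₀, ← Real.sqrt_mul (sq_nonneg S), hSq, Real.sqrt_one]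

theorem norm_sub_eq_mul_sqrt {E : Type*} [NormedAddCommGroup E] [InnerProductSpace ℝ E]
    {X Y : E} (hX : ‖X‖ ≠ 0) {c r : ℝ} (hc : c = inner ℝ X Y / (‖X‖ * ‖Y‖)) (hr : r = ‖Y‖ / ‖X‖) :
    ‖X - Y‖ = ‖X‖ * √(1 - 2 * c * r + r ^ 2) := by
  rcases eq_or_ne Y 0 with rfl | hY
  · simp [hr]
  have hY' : ‖Y‖ ≠ 0 := norm_ne_zero_iff.2 hY
  have key : ‖X - Y‖ ^ 2 = ‖X‖ ^ 2 * (1 - 2 * c * r + r ^ 2) := by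
    rw [norm_sub_sq_real, hc, hr]
    field_simp
  rw [← Real.sqrt_sq (norm_nonneg (X - Y)), key, Real.sqrt_mul (sq_nonneg _),
    Real.sqrt_sq (norm_nonneg X)]

theorem green_legendre_expansion_general (X Y : EuclideanSpace ℝ (Fin 3))
    (hlt : ‖Y‖ < ‖X‖)
    (cosα r : ℝ) (hcos : cosα = inner ℝ X Y / (‖X‖ * ‖Y‖)) (hr : r = ‖Y‖ / ‖X‖) :
    1 / ‖X - Y‖ = (1 / ‖X‖) * ∑' n : ℕ, legendre n cosα * r ^ n ∧
      Summable (fun n : ℕ => |legendre n cosα * r ^ n|) := by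
  have hX : 0 < ‖X‖ := (norm_nonneg Y).trans_lt hlt
  have hx : |cosα| ≤ 1 := hcos ▸ abs_real_inner_div_norm_mul_norm_le_one X Y
  have hr₀ : 0 ≤ r := hr ▸ by positivity
  have hr₁ : r < 1 := by rwa [hr, div_lt_one hX]
  refine ⟨?_, summable_abs_legendre_mul_pow hx hr₀ hr₁⟩
  rw [tsum_legendre_mul_pow hx hr₀ hr₁, norm_sub_eq_mul_sqrt hX.ne' hcos hr, one_div_mul_one_div]

theorem green_legendre_expansion (X Y : EuclideanSpace ℝ (Fin 3))
    (h0 : 0 < ‖Y‖) (hlt : ‖Y‖ < ‖X‖)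
    (cosα r : ℝ) (hcos : cosα = inner ℝ X Y / (‖X‖ * ‖Y‖)) (hr : r = ‖Y‖ / ‖X‖) :
    1 / ‖X - Y‖ = (1 / ‖X‖) * ∑' n : ℕ, legendre n cosα * r ^ n ∧
      Summable (fun n : ℕ => |legendre n cosα * r ^ n|) :=
  green_legendre_expansion_general X Y hlt cosα r hcos hr
end
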